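/- Let T be a deterministic single-tape Turing machine and w an input word, and let Trace_m denote the first m blocks of the simulation trace, a string of length 4m. Then for every m ∈ ℕ, every cell r ∈ ℕ_{>0}, and all symbols σ ≠ τ in Γ: the number of positions j with 1 ≤ j ≤ 4m such that the token of Trace_m at position j is WRITE(σ→τ) and the token at position j − 2 is the signpost c_r, equals #{k : 0 ≤ k < m, η_k = r, ξ_k(r) = σ, ξ_{k+1}(r) = τ}. -/
import Mathlib


/-- A head movement direction of a Turing machine: left, right, or stay. -/
inductive Dir : Type
  | L : Dir
  | R : Dir
  | S : Dir

/-- A deterministic single-tape Turing machine with state type `Q` and tape alphabet `Γ`: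
a blank symbol, an initial state, a set of halting states (as a Boolean predicate), and a
transition function giving the new state, the symbol written, and the head movement.
(The value of `trans` on halting states is irrelevant: it is never used.) -/
structure TM (Q Γ : Type*) where
  blank : Γ
  start : Q
  halt : Q → Bool
  trans : Q → Γ → Q × Γ × Dir

/-- A configuration of a single-tape Turing machine: current state, head position in
`ℕ` (only positions `≥ 1` are used; the tape is one-sided), and tape contents. -/
structure Cfg (Q Γ : Type*) where
  q : Q
  head : ℕ
  tape : ℕ → Γ

variable {Q Γ : Type*}

/-- One step of the Turing machine: if the state is halting the configuration is
unchanged; otherwise apply the transition function, write the new symbol at the head,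
and move the head (clamped at cell `1` on a left move). -/
def TM.step (T : TM Q Γ) (c : Cfg Q Γ) : Cfg Q Γ :=
  if T.halt c.q then c
  else
    let t := T.trans c.q (c.tape c.head)
    { q := t.1
      head :=
        match t.2.2 with
        | Dir.L => max (c.head - 1) 1
        | Dir.R => c.head + 1
        | Dir.S => c.head
      tape := Function.update c.tape c.head t.2.1 }

/-- The initial configuration on input `w`: initial state, head at cell `1`, and the tape
containing `w` in cells `1, …, |w|` and blanks elsewhere. -/
def TM.initCfg (T : TM Q Γ) (w : List Γ) : Cfg Q Γ where
  q := T.start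
  head := 1
  tape := fun r => if h : 1 ≤ r ∧ r ≤ w.length then w.get ⟨r - 1, by omega⟩ else T.blank

/-- The configuration of `T` on input `w` after `m` steps. -/
def TM.run (T : TM Q Γ) (w : List Γ) (m : ℕ) : Cfg Q Γ :=
  T.step^[m] (T.initCfg w)

/-- The trace alphabet of the value-change Turing-machine simulation: state tokens,
the block separator `$`, the `KEEP` token, `WRITE(σ→τ)` tokens, signpost tokens `c_r`
(one per tape cell), tape-symbol tokens (used when emitting the annotated output), and
the distinguished symbols `⟨SEP⟩` and `⟨EOS⟩`. -/
inductive Tok (Q Γ : Type*) : Type _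
  | state : Q → Tok Q Γ
  | dollar : Tok Q Γ
  | keep : Tok Q Γ
  | write : Γ → Γ → Tok Q Γ
  | sign : ℕ → Tok Q Γ
  | symb : Γ → Tok Q Γ
  | SEP : Tok Q Γ
  | EOS : Tok Q Γ
deriving DecidableEq

/-- The token of a list at a 1-indexed position (`none` if out of range). -/
def posGet {Λ : Type*} (l : List Λ) : ℕ → Option Λ
  | 0 => none
  | j + 1 => l[j]?

variable [DecidableEq Γ]

/-- The `m`-th block of the simulation trace: the 4-token string
`(q_m, c_{η_m}, $, e_m)` where `e_m = KEEP` if the symbol under the head is unchanged by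
step `m` and `e_m = WRITE(ξ_m(η_m) → ξ_{m+1}(η_m))` otherwise. -/
def TM.block (T : TM Q Γ) (w : List Γ) (m : ℕ) : List (Tok Q Γ) :=
  [Tok.state (T.run w m).q, Tok.sign (T.run w m).head, Tok.dollar,
    if (T.run w (m + 1)).tape (T.run w m).head = (T.run w m).tape (T.run w m).head then
      Tok.keep
    else
      Tok.write ((T.run w m).tape (T.run w m).head)
        ((T.run w (m + 1)).tape (T.run w m).head)]

/-- `Trace_m := B₀ B₁ ⋯ B_{m−1}`, the concatenation of the first `m` simulation blocks;
a string of length `4m`. -/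
def TM.trace (T : TM Q Γ) (w : List Γ) (m : ℕ) : List (Tok Q Γ) :=
  (List.range m).flatMap (T.block w)

lemma TM.trace_succ (T : TM Q Γ) (w : List Γ) (m : ℕ) :
    T.trace w (m + 1) = T.trace w m ++ T.block w m := by
  simp [TM.trace, List.range_succ]

lemma TM.trace_length (T : TM Q Γ) (w : List Γ) (m : ℕ) :
    (T.trace w m).length = 4 * m := by
  induction m with
  | zero => simp [TM.trace]
  | succ n ih =>
    rw [TM.trace_succ, List.length_append, ih, TM.block]
    simp; omega

lemma posGet_trace_le (T : TM Q Γ) (w : List Γ) (m j : ℕ) (hj : j ≤ 4 * m) :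
    posGet (T.trace w (m + 1)) j = posGet (T.trace w m) j := by
  cases j with
  | zero => rfl
  | succ j =>
    rw [TM.trace_succ]
    simp only [posGet]
    rw [List.getElem?_append_left (by rw [TM.trace_length]; omega)]

lemma posGet_trace_block (T : TM Q Γ) (w : List Γ) (m t : ℕ) :
    posGet (T.trace w (m + 1)) (4 * m + t + 1) = (T.block w m)[t]? := by
  rw [TM.trace_succ]
  simp only [posGet]
  rw [List.getElem?_append_right (by rw [TM.trace_length]; omega), TM.trace_length]
  congr 1; omega

/-- **The trace write-event counts equal the actual value-change counts.**
For every `m`, cell `r ≥ 1`, and distinct symbols `σ ≠ τ`, the number of 1-indexed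
positions `j ≤ 4m` of `Trace_m` holding the token `WRITE(σ→τ)` with the signpost `c_r`
two positions earlier equals the number of steps `k < m` at which the head is at `r` and
cell `r` changes from `σ` to `τ`. -/
theorem TM.trace_write_count [Fintype Q] [Fintype Γ] [DecidableEq Q]
    (T : TM Q Γ) (w : List Γ) (m : ℕ) (r : ℕ) (hr : 1 ≤ r) (σ τ : Γ) (hστ : σ ≠ τ) :
    ((Finset.Icc 1 (4 * m)).filter (fun j =>
        posGet (T.trace w m) j = some (Tok.write σ τ) ∧
        posGet (T.trace w m) (j - 2) = some (Tok.sign r))).card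
    = ((Finset.range m).filter (fun k =>
        (T.run w k).head = r ∧ (T.run w k).tape r = σ ∧
        (T.run w (k + 1)).tape r = τ)).card := by
  induction m with
  | zero => simp
  | succ n ih =>
    -- evaluate the trace tokens in the new block
    have h1 : posGet (T.trace w (n + 1)) (4 * n + 1)
        = some (Tok.state (T.run w n).q) := by
      simpa [TM.block] using posGet_trace_block T w n 0
    have h2 : posGet (T.trace w (n + 1)) (4 * n + 2)
        = some (Tok.sign (T.run w n).head) := by
      simpa [TM.block] using posGet_trace_block T w n 1
    have h3 : posGet (T.trace w (n + 1)) (4 * n + 3)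
        = some (Tok.dollar : Tok Q Γ) := by
      simpa [TM.block] using posGet_trace_block T w n 2
    have h4 : posGet (T.trace w (n + 1)) (4 * n + 4)
        = some (if (T.run w (n + 1)).tape (T.run w n).head
                  = (T.run w n).tape (T.run w n).head then
            (Tok.keep : Tok Q Γ)
          else
            Tok.write ((T.run w n).tape (T.run w n).head)
              ((T.run w (n + 1)).tape (T.run w n).head)) := by
      simpa [TM.block] using posGet_trace_block T w n 3
    have hsplit : Finset.Icc 1 (4 * (n + 1))
        = Finset.Icc 1 (4 * n) ∪ Finset.Icc (4 * n + 1) (4 * n + 4) := by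
      ext j; simp only [Finset.mem_Icc, Finset.mem_union]; omega
    have hdisj : Disjoint (Finset.Icc 1 (4 * n)) (Finset.Icc (4 * n + 1) (4 * n + 4)) := by
      rw [Finset.disjoint_left]; intro a ha hb
      simp only [Finset.mem_Icc] at ha hb; omega
    rw [hsplit, Finset.filter_union,
      Finset.card_union_of_disjoint (Finset.disjoint_filter_filter hdisj)]
    -- first part equals the old trace count
    have hfirst : (Finset.Icc 1 (4 * n)).filter (fun j =>
        posGet (T.trace w (n + 1)) j = some (Tok.write σ τ) ∧
        posGet (T.trace w (n + 1)) (j - 2) = some (Tok.sign r))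
      = (Finset.Icc 1 (4 * n)).filter (fun j =>
        posGet (T.trace w n) j = some (Tok.write σ τ) ∧
        posGet (T.trace w n) (j - 2) = some (Tok.sign r)) := by
      apply Finset.filter_congr
      intro j hj
      simp only [Finset.mem_Icc] at hj
      rw [posGet_trace_le T w n j (by omega), posGet_trace_le T w n (j - 2) (by omega)]
    rw [hfirst, ih]
    -- second part
    have hset : Finset.Icc (4 * n + 1) (4 * n + 4)
        = {4 * n + 1, 4 * n + 2, 4 * n + 3, 4 * n + 4} := by
      ext j
      simp only [Finset.mem_Icc, Finset.mem_insert, Finset.mem_singleton]; omega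
    have hcond : ((posGet (T.trace w (n + 1)) (4 * n + 4) = some (Tok.write σ τ) ∧
        posGet (T.trace w (n + 1)) (4 * n + 4 - 2) = some (Tok.sign r)))
        ↔ ((T.run w n).head = r ∧ (T.run w n).tape r = σ ∧
            (T.run w (n + 1)).tape r = τ) := by
      have e2 : 4 * n + 4 - 2 = 4 * n + 2 := by omega
      rw [e2, h2, h4]
      constructor
      · rintro ⟨hw, hs⟩
        have hhead : (T.run w n).head = r := by
          simpa using hs
        by_cases heq : (T.run w (n + 1)).tape (T.run w n).head
            = (T.run w n).tape (T.run w n).head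
        · simp [heq] at hw
        · rw [if_neg heq] at hw
          injection hw with hw
          injection hw with ha hb
          subst hhead
          exact ⟨rfl, ha, hb⟩
      · rintro ⟨hhead, hσ, hτ⟩
        rw [hhead, hσ, hτ]
        have hne : ¬ (τ = σ) := fun h => hστ h.symm
        rw [if_neg hne]
        exact ⟨rfl, rfl⟩
    rw [hset]
    by_cases hc : (T.run w n).head = r ∧ (T.run w n).tape r = σ ∧
        (T.run w (n + 1)).tape r = τ
    · have : ({4 * n + 1, 4 * n + 2, 4 * n + 3, 4 * n + 4} : Finset ℕ).filter (fun j =>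
          posGet (T.trace w (n + 1)) j = some (Tok.write σ τ) ∧
          posGet (T.trace w (n + 1)) (j - 2) = some (Tok.sign r)) = {4 * n + 4} := by
        ext j
        simp only [Finset.mem_filter, Finset.mem_insert, Finset.mem_singleton]
        constructor
        · rintro ⟨hj, hw, hs⟩
          rcases hj with rfl | rfl | rfl | rfl
          · rw [h1] at hw; exact absurd hw (by simp)
          · rw [h2] at hw; exact absurd hw (by simp)
          · rw [h3] at hw; exact absurd hw (by simp)
          · rfl
        · rintro rfl
          exact ⟨by omega, hcond.mpr hc⟩
      rw [this, Finset.range_add_one, Finset.filter_insert, if_pos hc,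
        Finset.card_insert_of_notMem (by simp)]
      simp
    · have : ({4 * n + 1, 4 * n + 2, 4 * n + 3, 4 * n + 4} : Finset ℕ).filter (fun j =>
          posGet (T.trace w (n + 1)) j = some (Tok.write σ τ) ∧
          posGet (T.trace w (n + 1)) (j - 2) = some (Tok.sign r)) = ∅ := by
        ext j
        simp only [Finset.mem_filter, Finset.mem_insert, Finset.mem_singleton,
          Finset.notMem_empty, iff_false, not_and]
        rintro (rfl | rfl | rfl | rfl)
        · rw [h1]; intro hw _; simp at hw
        · rw [h2]; intro hw _; simp at hw
        · rw [h3]; intro hw _; simp at hw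
        · intro hw hs; exact hc (hcond.mp ⟨hw, hs⟩)
      rw [this, Finset.range_add_one, Finset.filter_insert, if_neg hc]
      simp
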